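/- Let v(t) = (V sin(w₀t), V sin(w₀t − 2π/3), V sin(w₀t + 2π/3)) with V > 0 (balanced positive-sequence three-phase voltage). Then ‖v(t)‖² = (3/2)V² (constant), ρ(t) = 0, and ω_vec(t) = (w₀/√3)·(1,1,1) for all t; in particular ‖ω_vec‖ = |w₀|. -/

import Mathlib

/-!
Write `v t = V • u (w₀ t)` with `u θ = (sin θ, sin (θ - 2π/3), sin (θ + 2π/3))`; then
`deriv v t = V w₀ • u' (w₀ t)`, where `u'` is the same balanced triple with cosines. Expanding the
shifted sines and cosines through `cos (2π/3) = -1/2`, `sin (2π/3) = √3/2` and `sin² + cos² = 1`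
gives `‖u θ‖² = 3/2`, `⟪u θ, u' θ⟫ = 0` and `u θ × u' θ = (√3/2)(1,1,1)`, independently of `θ`.
The claims follow by bilinearity, with `(V² w₀ √3/2) / (3V²/2) = w₀/√3` and `‖(1,1,1)‖ = √3`.
-/

open scoped InnerProductSpace

noncomputable def cross3 (a b : EuclideanSpace ℝ (Fin 3)) : EuclideanSpace ℝ (Fin 3) :=
  WithLp.toLp 2 ![a 1 * b 2 - a 2 * b 1, a 2 * b 0 - a 0 * b 2, a 0 * b 1 - a 1 * b 0]

open Real

lemma cos_two_pi_div_three : cos (2 * π / 3) = -(1 / 2) := by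
  rw [show 2 * π / 3 = π - π / 3 by ring, cos_pi_sub, cos_pi_div_three]

lemma sin_two_pi_div_three : sin (2 * π / 3) = √3 / 2 := by
  rw [show 2 * π / 3 = π - π / 3 by ring, sin_pi_sub, sin_pi_div_three]

lemma cross3_smul_smul (a b : ℝ) (x y : EuclideanSpace ℝ (Fin 3)) :
    cross3 (a • x) (b • y) = (a * b) • cross3 x y := by
  ext i
  fin_cases i <;> simp [cross3] <;> ring

lemma norm_toLp_one_one_one : ‖(WithLp.toLp 2 ![1, 1, 1] : EuclideanSpace ℝ (Fin 3))‖ = √3 := by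
  simp [EuclideanSpace.norm_eq, Fin.sum_univ_three]
  norm_num

noncomputable def threePhaseSin (θ : ℝ) : EuclideanSpace ℝ (Fin 3) :=
  WithLp.toLp 2 ![sin θ, sin (θ - 2 * π / 3), sin (θ + 2 * π / 3)]

noncomputable def threePhaseCos (θ : ℝ) : EuclideanSpace ℝ (Fin 3) :=
  WithLp.toLp 2 ![cos θ, cos (θ - 2 * π / 3), cos (θ + 2 * π / 3)]

lemma hasDerivAt_threePhaseSin (θ : ℝ) : HasDerivAt threePhaseSin (threePhaseCos θ) θ := by
  have h : HasDerivAt (fun θ => ![sin θ, sin (θ - 2 * π / 3), sin (θ + 2 * π / 3)])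
      ![cos θ, cos (θ - 2 * π / 3), cos (θ + 2 * π / 3)] θ := by
    rw [hasDerivAt_pi]
    intro i
    fin_cases i
    · exact hasDerivAt_sin θ
    · simpa using ((hasDerivAt_id θ).sub_const (2 * π / 3)).sin
    · simpa using ((hasDerivAt_id θ).add_const (2 * π / 3)).sin
  exact (PiLp.continuousLinearEquiv 2 ℝ (fun _ : Fin 3 => ℝ)).symm.hasFDerivAt.comp_hasDerivAt θ h

lemma hasDerivAt_smul_threePhaseSin (V ω t : ℝ) :
    HasDerivAt (fun t => V • threePhaseSin (ω * t)) ((V * ω) • threePhaseCos (ω * t)) t := by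
  rw [mul_smul]
  exact ((hasDerivAt_threePhaseSin _).scomp t ((hasDerivAt_id t).const_mul ω)).const_smul V
    |>.congr_deriv (by simp)

lemma norm_threePhaseSin_sq (θ : ℝ) : ‖threePhaseSin θ‖ ^ 2 = 3 / 2 := by
  rw [EuclideanSpace.norm_sq_eq]
  simp only [threePhaseSin, sin_sub, sin_add, cos_two_pi_div_three, sin_two_pi_div_three,
    norm_eq_abs, sq_abs, Fin.sum_univ_three, Matrix.cons_val_zero, Matrix.cons_val_one,
    Matrix.cons_val]
  have h3 : √3 ^ 2 = 3 := sq_sqrt (by norm_num)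
  linear_combination (3 / 2) * sin_sq_add_cos_sq θ + (cos θ ^ 2 / 2) * h3

lemma inner_threePhaseSin_threePhaseCos (θ : ℝ) : ⟪threePhaseSin θ, threePhaseCos θ⟫_ℝ = 0 := by
  simp only [threePhaseSin, threePhaseCos, sin_sub, sin_add, cos_sub, cos_add, cos_two_pi_div_three,
    sin_two_pi_div_three, PiLp.inner_apply, RCLike.inner_apply, conj_trivial, Fin.sum_univ_three,
    Matrix.cons_val_zero, Matrix.cons_val_one, Matrix.cons_val]
  have h3 : √3 ^ 2 = 3 := sq_sqrt (by norm_num)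
  linear_combination (-(sin θ * cos θ) / 2) * h3

lemma cross3_threePhaseSin_threePhaseCos (θ : ℝ) :
    cross3 (threePhaseSin θ) (threePhaseCos θ) = (√3 / 2) • WithLp.toLp 2 ![1, 1, 1] := by
  ext i
  fin_cases i <;>
  · simp only [cross3, threePhaseSin, threePhaseCos, sin_sub, sin_add, cos_sub, cos_add,
      cos_two_pi_div_three, sin_two_pi_div_three, PiLp.smul_apply, smul_eq_mul, mul_one,
      Fin.zero_eta, Fin.mk_one, Fin.reduceFinMk, Matrix.cons_val_zero, Matrix.cons_val_one,
      Matrix.cons_val]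
    linear_combination (√3 / 2) * sin_sq_add_cos_sq θ

theorem positive_sequence_invariants (V w₀ : ℝ) (hV : 0 < V)
    (v : ℝ → EuclideanSpace ℝ (Fin 3))
    (hv : v = fun t => (WithLp.toLp 2 ![V * Real.sin (w₀ * t), V * Real.sin (w₀ * t - 2 * Real.pi / 3),
      V * Real.sin (w₀ * t + 2 * Real.pi / 3)] : EuclideanSpace ℝ (Fin 3))) (t : ℝ) :
    ‖v t‖ ^ 2 = 3 / 2 * V ^ 2 ∧
    ⟪v t, deriv v t⟫_ℝ / ‖v t‖ ^ 2 = 0 ∧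
    (‖v t‖ ^ 2)⁻¹ • cross3 (v t) (deriv v t) =
      (w₀ / Real.sqrt 3) • (WithLp.toLp 2 ![1, 1, 1] : EuclideanSpace ℝ (Fin 3)) ∧
    ‖(‖v t‖ ^ 2)⁻¹ • cross3 (v t) (deriv v t)‖ = |w₀| := by
  have hv' : v = fun t => V • threePhaseSin (w₀ * t) := by
    subst hv
    funext s
    ext i
    fin_cases i <;> simp [threePhaseSin]
  have hvt : v t = V • threePhaseSin (w₀ * t) := by rw [hv']
  have hderiv : deriv v t = (V * w₀) • threePhaseCos (w₀ * t) := by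
    rw [hv']
    exact (hasDerivAt_smul_threePhaseSin V w₀ t).deriv
  have hnorm : ‖v t‖ ^ 2 = 3 / 2 * V ^ 2 := by
    rw [hvt, norm_smul, mul_pow, norm_threePhaseSin_sq, norm_eq_abs, sq_abs, mul_comm]
  have hω : (‖v t‖ ^ 2)⁻¹ • cross3 (v t) (deriv v t) =
      (w₀ / √3) • (WithLp.toLp 2 ![1, 1, 1] : EuclideanSpace ℝ (Fin 3)) := by
    rw [hnorm, hderiv, hvt, cross3_smul_smul, cross3_threePhaseSin_threePhaseCos, smul_smul,
      smul_smul]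
    congr 1
    have h3 : √3 ^ 2 = 3 := sq_sqrt (by norm_num)
    field_simp
    linear_combination w₀ * h3
  refine ⟨hnorm, ?_, hω, ?_⟩
  · rw [hderiv, hvt, inner_smul_left, inner_smul_right, inner_threePhaseSin_threePhaseCos]
    simp
  · rw [hω, norm_smul, norm_toLp_one_one_one, norm_div, norm_eq_abs,
      norm_of_nonneg (sqrt_nonneg 3)]
    field_simp
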